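/- Let S(n) = Σ_{k=0}^{n} binom(n,k)^2 · binom(n−k, k). For every nonnegative integer n, S(n) ≡ (−1)^{d(n)} (mod 5) if every base-5 digit of n belongs to {0,1,3}, where d(n) is the number of base-5 digits of n equal to 3; and S(n) ≡ 0 (mod 5) otherwise. -/

import Mathlib

/-!
By Lucas's theorem, writing `n = p a + b` and `k = p u + v` with `b, v < p`, the summand of `S(n)`
factors modulo a prime `p` as the product of the summands for `(a, u)` and `(b, v)`
(when `v ≤ b` and `u ≤ a` this also applies to `binom(n-k, k)`, and otherwise both sides vanish).
Summing over `u` and `v` gives `S(p a + b) ≡ S(a) S(b)`, so `S(n)` is congruent to the product of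
`S` over the base-`p` digits of `n`. For `p = 5` the digit values are
`S(0), …, S(4) = 1, 1, 5, 19, 85 ≡ 1, 1, 0, -1, 0`.
-/

/-- `S(n) = Σ_{k=0}^n binom(n,k)^2 binom(n-k,k)`. -/
def Sseq (n : ℕ) : ℕ :=
  ∑ k ∈ Finset.range (n + 1), n.choose k ^ 2 * (n - k).choose k

open Finset

theorem Finset.sum_range_mul_eq_sum_sum {M : Type*} [AddCommMonoid M] (f : ℕ → M) (p m : ℕ) :
    ∑ k ∈ range (p * m), f k = ∑ u ∈ range m, ∑ v ∈ range p, f (p * u + v) := by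
  induction m with
  | zero => simp
  | succ m ih => rw [Nat.mul_succ, sum_range_add, ih, sum_range_succ]

def SseqTerm (n k : ℕ) : ℕ := n.choose k ^ 2 * (n - k).choose k

theorem SseqTerm_eq_zero_of_lt {n k : ℕ} (h : n < k) : SseqTerm n k = 0 := by
  simp [SseqTerm, Nat.choose_eq_zero_of_lt h]

theorem Sseq_eq_sum_range_SseqTerm {n N : ℕ} (h : n < N) :
    Sseq n = ∑ k ∈ range N, SseqTerm n k :=
  sum_subset (range_subset_range.mpr h) fun _ hN hn =>
    SseqTerm_eq_zero_of_lt (by simp only [mem_range] at hN hn; omega)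

section Lucas

variable {p : ℕ} [Fact p.Prime]

theorem choose_mul_add_mul_add_cast {a b u v : ℕ} (hb : b < p) (hv : v < p) :
    ((p * a + b).choose (p * u + v) : ZMod p) = a.choose u * b.choose v := by
  have hp : 0 < p := Nat.Prime.pos Fact.out
  have h := (ZMod.intCast_eq_intCast_iff _ _ _).mpr
    (Choose.choose_modEq_choose_mod_mul_choose_div (n := p * a + b) (k := p * u + v) (p := p))
  push_cast at h
  rw [Nat.mul_add_mod, Nat.mul_add_mod, Nat.mul_add_div hp, Nat.mul_add_div hp,
    Nat.mod_eq_of_lt hb, Nat.mod_eq_of_lt hv, Nat.div_eq_of_lt hb, Nat.div_eq_of_lt hv,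
    add_zero, add_zero] at h
  rw [h, mul_comm]

theorem SseqTerm_mul_add_mul_add_cast {a b u v : ℕ} (hb : b < p) (hv : v < p) :
    (SseqTerm (p * a + b) (p * u + v) : ZMod p) = SseqTerm a u * SseqTerm b v := by
  by_cases hle : u ≤ a ∧ v ≤ b
  · have hsub : p * a + b - (p * u + v) = p * (a - u) + (b - v) := by
      rw [Nat.mul_sub]; have := Nat.mul_le_mul_left p hle.1; omega
    simp only [SseqTerm, Nat.cast_mul, Nat.cast_pow, hsub, choose_mul_add_mul_add_cast hb hv,
      choose_mul_add_mul_add_cast (Nat.sub_lt_of_lt hb) hv]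
    ring
  · rcases not_and_or.mp hle with h | h <;>
      simp [SseqTerm, choose_mul_add_mul_add_cast hb hv, Nat.choose_eq_zero_of_lt (not_le.mp h)]

theorem Sseq_mul_add_cast {a b : ℕ} (hb : b < p) :
    (Sseq (p * a + b) : ZMod p) = Sseq a * Sseq b := by
  rw [Sseq_eq_sum_range_SseqTerm (show p * a + b < p * (a + 1) by rw [Nat.mul_succ]; omega),
    Sseq_eq_sum_range_SseqTerm (Nat.lt_succ_self a), Sseq_eq_sum_range_SseqTerm hb]
  push_cast
  rw [sum_range_mul_eq_sum_sum, sum_mul_sum]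
  refine sum_congr rfl fun u _ => sum_congr rfl fun v hv => ?_
  exact SseqTerm_mul_add_mul_add_cast hb (mem_range.mp hv)

theorem Sseq_ofDigits_cast {L : List ℕ} (hL : ∀ d ∈ L, d < p) :
    (Sseq (Nat.ofDigits p L) : ZMod p) = (L.map fun d => (Sseq d : ZMod p)).prod := by
  induction L with
  | nil => simp [Sseq]
  | cons d L ih =>
    rw [Nat.ofDigits_cons, add_comm, Sseq_mul_add_cast (hL d List.mem_cons_self),
      ih fun e he => hL e (List.mem_cons_of_mem d he), List.map_cons, List.prod_cons, mul_comm]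

theorem Sseq_cast_eq_prod_digits (n : ℕ) :
    (Sseq n : ZMod p) = ((p.digits n).map fun d => (Sseq d : ZMod p)).prod := by
  conv_lhs => rw [← Nat.ofDigits_digits p n]
  exact Sseq_ofDigits_cast fun d hd => Nat.digits_lt_base (Nat.Prime.one_lt Fact.out) hd

end Lucas

instance fact_prime_five : Fact (Nat.Prime 5) := ⟨Nat.prime_five⟩

theorem prod_map_Sseq_cast_five_of_forall {L : List ℕ} (hL : ∀ d ∈ L, d = 0 ∨ d = 1 ∨ d = 3) :
    (L.map fun d => (Sseq d : ZMod 5)).prod = (-1) ^ L.count 3 := by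
  induction L with
  | nil => rfl
  | cons d L ih =>
    rw [List.map_cons, List.prod_cons, List.count_cons, pow_add,
      ih fun e he => hL e (List.mem_cons_of_mem d he), mul_comm]
    rcases hL d List.mem_cons_self with rfl | rfl | rfl <;> congr 1

theorem prod_map_Sseq_cast_five_of_not_forall {L : List ℕ} (hlt : ∀ d ∈ L, d < 5)
    (hL : ¬∀ d ∈ L, d = 0 ∨ d = 1 ∨ d = 3) :
    (L.map fun d => (Sseq d : ZMod 5)).prod = 0 := by
  push Not at hL
  obtain ⟨d, hd, h0, h1, h3⟩ := hL
  refine List.prod_eq_zero (List.mem_map.mpr ⟨d, hd, ?_⟩)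
  obtain rfl | rfl : d = 2 ∨ d = 4 := by have := hlt d hd; omega
  all_goals decide

theorem Sseq_mod_five_digits (n : ℕ) :
    (if ∀ d ∈ Nat.digits 5 n, d = 0 ∨ d = 1 ∨ d = 3 then
      (Sseq n : ℤ) ≡ (-1) ^ ((Nat.digits 5 n).count 3) [ZMOD 5]
    else (Sseq n : ℤ) ≡ 0 [ZMOD 5]) := by
  have hprod := Sseq_cast_eq_prod_digits (p := 5) n
  split_ifs with h <;> refine (ZMod.intCast_eq_intCast_iff _ _ 5).mp ?_ <;> push_cast <;> rw [hprod]
  · exact prod_map_Sseq_cast_five_of_forall h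
  · exact prod_map_Sseq_cast_five_of_not_forall (fun d => Nat.digits_lt_base (by norm_num)) h
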